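/- Let φ, θ ∈ ℝ and set α = cos(2θ)·cos(θ−φ), β = −cos(2θ)·cos(2φ), γ = cos(2φ)·cos(θ−φ). Let σX and σY be the 2×2 complex matrices σX = [[0,1],[1,0]] and σY = [[0,−i],[i,0]], and define A₀ = cos φ · σX − sin φ · σY and A₁ = cos θ · σX + sin θ · σY. Let J be the 4×4 matrix J = α·(A₀ ⊗ A₀) + β·(A₀ ⊗ A₁ + A₁ ⊗ A₀) + γ·(A₁ ⊗ A₁), where ⊗ is the Kronecker product. Then the vectors v± = (e₀₀ ± i·e₁₁)/√2 satisfy J·v₊ = (2·sin²(θ+φ)·sin(θ−φ))·v₊ and J·v₋ = −(2·sin²(θ+φ)·sin(θ−φ))·v₋; that is, (|00⟩ ± i|11⟩)/√2 are eigenvectors of the Bell operator with eigenvalues ±η^Q(φ,θ), so the ideal qubit strategy achieves the quantum bound ⟨J_{φ,θ}⟩ = η^Q(φ,θ). -/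
import Mathlib
set_option maxHeartbeats 1000000


open Matrix Real
open scoped Kronecker

/-- The Pauli matrix `σX`. -/
def sigmaX : Matrix (Fin 2) (Fin 2) ℂ := !![0, 1; 1, 0]

/-- The Pauli matrix `σY`. -/
def sigmaY : Matrix (Fin 2) (Fin 2) ℂ := !![0, -Complex.I; Complex.I, 0]

/-- The ideal measurement `A₀ = cos φ · σX − sin φ · σY`. -/
noncomputable def Aop0 (φ : ℝ) : Matrix (Fin 2) (Fin 2) ℂ :=
  (cos φ : ℂ) • sigmaX - (sin φ : ℂ) • sigmaY

/-- The ideal measurement `A₁ = cos θ · σX + sin θ · σY`. -/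
noncomputable def Aop1 (θ : ℝ) : Matrix (Fin 2) (Fin 2) ℂ :=
  (cos θ : ℂ) • sigmaX + (sin θ : ℂ) • sigmaY

/-- The Bell operator of the `J_{φ,θ}` family for the ideal qubit strategy. -/
noncomputable def Jmat (φ θ : ℝ) : Matrix (Fin 2 × Fin 2) (Fin 2 × Fin 2) ℂ :=
  ((cos (2 * θ) * cos (θ - φ) : ℝ) : ℂ) • (Aop0 φ ⊗ₖ Aop0 φ)
    + ((-(cos (2 * θ) * cos (2 * φ)) : ℝ) : ℂ) • (Aop0 φ ⊗ₖ Aop1 θ + Aop1 θ ⊗ₖ Aop0 φ)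
    + ((cos (2 * φ) * cos (θ - φ) : ℝ) : ℂ) • (Aop1 θ ⊗ₖ Aop1 θ)

/-- The vector `(|00⟩ + i|11⟩)/√2`. -/
noncomputable def vPlus : (Fin 2 × Fin 2) → ℂ := fun p =>
  if p = (0, 0) then ((1 / Real.sqrt 2 : ℝ) : ℂ)
  else if p = (1, 1) then Complex.I * ((1 / Real.sqrt 2 : ℝ) : ℂ) else 0

/-- The vector `(|00⟩ − i|11⟩)/√2`. -/
noncomputable def vMinus : (Fin 2 × Fin 2) → ℂ := fun p =>
  if p = (0, 0) then ((1 / Real.sqrt 2 : ℝ) : ℂ)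
  else if p = (1, 1) then -Complex.I * ((1 / Real.sqrt 2 : ℝ) : ℂ) else 0

/-- `(|00⟩ ± i|11⟩)/√2` are eigenvectors of the Bell operator `J_{φ,θ}` with eigenvalues
`±η^Q(φ,θ) = ±2 sin²(θ+φ) sin(θ−φ)`; the ideal qubit strategy achieves the quantum bound. -/
theorem Jphitheta_ideal_strategy (φ θ : ℝ) :
    (Jmat φ θ).mulVec vPlus
        = ((2 * sin (θ + φ) ^ 2 * sin (θ - φ) : ℝ) : ℂ) • vPlus
    ∧ (Jmat φ θ).mulVec vMinus
        = ((-(2 * sin (θ + φ) ^ 2 * sin (θ - φ)) : ℝ) : ℂ) • vMinus := by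
  have hI3 : Complex.I ^ 3 = -Complex.I := by
    rw [pow_succ, Complex.I_sq]; ring
  constructor <;>
  · funext p
    obtain ⟨i, j⟩ := p
    fin_cases i <;> fin_cases j <;>
      simp only [Jmat, Aop0, Aop1, sigmaX, sigmaY, mulVec, vPlus, vMinus, Matrix.kroneckerMap,
        Matrix.add_apply, Matrix.smul_apply, Matrix.sub_apply, Matrix.of_apply, dotProduct,
        Fintype.sum_prod_type, Fin.sum_univ_two, Matrix.cons_val', Matrix.cons_val_zero,
        Matrix.cons_val_one, Matrix.head_cons, Matrix.empty_val', Matrix.cons_val_fin_one,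
        Matrix.head_fin_const, Pi.smul_apply, smul_eq_mul] <;>
      norm_num <;>
      (rw [Complex.cos_two_mul', Complex.cos_two_mul', Complex.cos_sub, Complex.sin_add,
        Complex.sin_sub]; ring_nf; simp only [Complex.I_sq, hI3]; ring_nf)
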